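/- arXiv:2106.01612 — 2 statements merged into one kernel-verified Lean document; each statement's English description precedes it below -/
import Mathlib

section
/- Let ν be a finite Borel measure on ℝ, let φ_ε be an approximate identity as above, and suppose there exists a constant K such that ∫_ℝ (φ_ε * ν)²(t) dt ≤ K for all sufficiently small ε > 0. Then ν is absolutely continuous with respect to Lebesgue measure with an L² density; in particular, if ν is a nonzero measure supported on a compact set S ⊂ ℝ, then S has positive Lebesgue measure. -/
open MeasureTheory

set_option maxHeartbeats 1000000 in
theorem uniform_L2_mollification_implies_pos_measure_support
    (ν : Measure ℝ) [IsFiniteMeasure ν]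
    (φ : ℝ → ℝ) (hφ : ContDiff ℝ (⊤ : ℕ∞) φ) (hφc : HasCompactSupport φ)
    (hφ0 : ∀ x, 0 ≤ φ x) (hφsupp : Function.support φ ⊆ Metric.ball 0 1)
    (hφint : ∫ x, φ x = 1)
    (K : ℝ) (ε₀ : ℝ) (hε₀ : 0 < ε₀)
    (hK : ∀ ε ∈ Set.Ioo (0:ℝ) ε₀,
      ∫ t, (∫ s, ε⁻¹ * φ (ε⁻¹ * (t - s)) ∂ν)^2 ≤ K) :
    ν ≪ volume ∧
    (∃ f : ℝ → ℝ, MemLp f 2 volume ∧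
      ν = volume.withDensity (fun t => ENNReal.ofReal (f t))) ∧
    (∀ S : Set ℝ, IsCompact S → ν ≠ 0 → ν Sᶜ = 0 → 0 < volume S) := by
  have hφcont : Continuous φ := hφ.continuous
  obtain ⟨C, hC⟩ : ∃ C, ∀ x, ‖φ x‖ ≤ C := hφc.exists_bound_of_continuous hφcont
  have hC' : ∀ x, φ x ≤ C := fun x => (le_abs_self _).trans (hC x)
  have hC0 : 0 ≤ C := le_trans (hφ0 0) (hC' 0)
  set Φ : ℝ → ℝ → ℝ := fun ε t => ε⁻¹ * φ (ε⁻¹ * t) with hΦdef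
  -- properties of the mollifier
  have hΦ0 : ∀ {ε : ℝ}, 0 < ε → ∀ t, 0 ≤ Φ ε t := by
    intro ε hε t
    exact mul_nonneg (inv_nonneg.2 hε.le) (hφ0 _)
  have hΦsupp : ∀ {ε : ℝ}, 0 < ε → ∀ {t : ℝ}, ε ≤ |t| → Φ ε t = 0 := by
    intro ε hε t ht
    have : φ (ε⁻¹ * t) = 0 := by
      by_contra h
      have := hφsupp (Function.mem_support.2 h)
      rw [Metric.mem_ball, dist_zero_right, Real.norm_eq_abs, abs_mul,
        abs_of_pos (inv_pos.2 hε)] at this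
      have h1 : ε⁻¹ * ε ≤ ε⁻¹ * |t| := by
        exact mul_le_mul_of_nonneg_left ht (inv_nonneg.2 hε.le)
      rw [inv_mul_cancel₀ hε.ne'] at h1
      linarith
    simp [hΦdef, this]
  have hΦbdd : ∀ {ε : ℝ}, 0 < ε → ∀ t, Φ ε t ≤ ε⁻¹ * C := by
    intro ε hε t
    exact mul_le_mul_of_nonneg_left (hC' _) (inv_nonneg.2 hε.le)
  have hΦcont : ∀ ε, Continuous (Φ ε) := by
    intro ε
    exact continuous_const.mul (hφcont.comp (continuous_const.mul continuous_id))
  have hΦcomp : ∀ {ε : ℝ}, 0 < ε → HasCompactSupport (Φ ε) := by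
    intro ε hε
    apply HasCompactSupport.intro (isCompact_Icc (a := -ε) (b := ε))
    intro t ht
    apply hΦsupp hε
    simp only [Set.mem_Icc, not_and_or, not_le] at ht
    rcases ht with h | h
    · rw [abs_of_neg (by linarith)]; linarith
    · rw [abs_of_pos (by linarith)]; linarith
  have hΦint : ∀ {ε : ℝ}, 0 < ε → ∫ t, Φ ε t = 1 := by
    intro ε hε
    rw [hΦdef]
    simp only
    rw [integral_const_mul, Measure.integral_comp_mul_left φ ε⁻¹, hφint, inv_inv,
      abs_of_pos hε, smul_eq_mul, mul_one, inv_mul_cancel₀ hε.ne']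
  -- the mollified functions
  set F : ℝ → ℝ → ℝ := fun ε t => ∫ s, Φ ε (t - s) ∂ν with hFdef
  have hΦtr_cont : ∀ (ε a : ℝ), Continuous (fun s : ℝ => Φ ε (a - s)) := fun ε a =>
    (hΦcont ε).comp (continuous_const.sub continuous_id)
  have hΦtr_comp : ∀ {ε : ℝ}, 0 < ε → ∀ a : ℝ, HasCompactSupport (fun s : ℝ => Φ ε (a - s)) := by
    intro ε hε a
    apply HasCompactSupport.intro (isCompact_Icc (a := a - ε) (b := a + ε))
    intro s hs
    apply hΦsupp hε
    simp only [Set.mem_Icc, not_and_or, not_le] at hs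
    rcases hs with h | h
    · rw [abs_of_pos (by linarith)]; linarith
    · rw [abs_of_neg (by linarith)]; linarith
  have hΦtr_int : ∀ {ε : ℝ}, 0 < ε → ∀ a : ℝ, Integrable (fun s : ℝ => Φ ε (a - s)) ν :=
    fun {ε} hε a => (hΦtr_cont ε a).integrable_of_hasCompactSupport (hΦtr_comp hε a)
  have hFmeas : ∀ ε, StronglyMeasurable (F ε) := by
    intro ε
    apply MeasureTheory.StronglyMeasurable.integral_prod_right'
      (f := fun p : ℝ × ℝ => Φ ε (p.1 - p.2))
    exact ((hΦcont ε).comp (continuous_fst.sub continuous_snd)).stronglyMeasurable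
  have hF0 : ∀ {ε : ℝ}, 0 < ε → ∀ t, 0 ≤ F ε t := by
    intro ε hε t
    exact integral_nonneg fun s => hΦ0 hε _
  have hprodν : ∀ {ε : ℝ}, 0 < ε →
      Integrable (fun p : ℝ × ℝ => Φ ε (p.2 - p.1)) (ν.prod volume) := by
    intro ε hε
    have hmeas : AEStronglyMeasurable (fun p : ℝ × ℝ => Φ ε (p.2 - p.1)) (ν.prod volume) :=
      ((hΦcont ε).comp (continuous_snd.sub continuous_fst)).aestronglyMeasurable
    rw [integrable_prod_iff hmeas]
    constructor
    · apply ae_of_all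
      intro s
      exact ((hΦcont ε).comp (continuous_id.sub continuous_const)).integrable_of_hasCompactSupport
        (by
          apply HasCompactSupport.intro (isCompact_Icc (a := s - ε) (b := s + ε))
          intro t ht
          apply hΦsupp hε
          simp only [Set.mem_Icc, not_and_or, not_le] at ht
          simp only [Pi.sub_apply, id_eq]
          rcases ht with h | h
          · rw [abs_of_neg (show t - s < 0 by linarith)]; linarith
          · rw [abs_of_pos (show (0:ℝ) < t - s by linarith)]; linarith)
    · have : (fun s : ℝ => ∫ t, ‖Φ ε (t - s)‖) = fun _ => (1 : ℝ) := by
        funext s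
        have : ∀ t : ℝ, ‖Φ ε (t - s)‖ = Φ ε (t - s) := fun t =>
          Real.norm_of_nonneg (hΦ0 hε _)
        simp_rw [this]
        rw [integral_sub_right_eq_self (Φ ε) s]
        exact hΦint hε
      rw [this]
      exact integrable_const _
  have hprod : ∀ {ε : ℝ}, 0 < ε →
      Integrable (fun p : ℝ × ℝ => Φ ε (p.1 - p.2)) (volume.prod ν) := by
    intro ε hε
    have := (hprodν hε).swap
    simpa [Function.comp_def] using this
  have hFint : ∀ {ε : ℝ}, 0 < ε → Integrable (F ε) volume := by
    intro ε hε
    exact (hprod hε).integral_prod_left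
  have hFbdd : ∀ {ε : ℝ}, 0 < ε → ∀ t, F ε t ≤ ε⁻¹ * C * (ν Set.univ).toReal := by
    intro ε hε t
    calc F ε t ≤ ∫ _, ε⁻¹ * C ∂ν :=
          integral_mono (hΦtr_int hε t) (integrable_const _) (fun s => hΦbdd hε _)
      _ = ε⁻¹ * C * (ν Set.univ).toReal := by
          rw [integral_const, smul_eq_mul, mul_comm]; rfl
  have hFsq : ∀ {ε : ℝ}, 0 < ε → Integrable (fun t => F ε t ^ 2) volume := by
    intro ε hε
    apply Integrable.mono' (((hFint hε).const_mul (ε⁻¹ * C * (ν Set.univ).toReal)))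
      (((hFmeas ε).pow 2).aestronglyMeasurable)
    apply ae_of_all
    intro t
    rw [Real.norm_eq_abs, abs_of_nonneg (sq_nonneg _), sq]
    exact mul_le_mul_of_nonneg_right (hFbdd hε t) (hF0 hε t)
  -- the key inequality for continuous compactly supported functions
  have key : ∀ g : ℝ → ℝ, Continuous g → HasCompactSupport g → (∀ x, 0 ≤ g x) →
      ∫ s, g s ∂ν ≤ Real.sqrt K * Real.sqrt (∫ t, g t ^ 2) := by
    intro g hgc hgs hg0
    obtain ⟨Cg, hCg⟩ : ∃ Cg, ∀ x, ‖g x‖ ≤ Cg := hgs.exists_bound_of_continuous hgc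
    have hgν : Integrable g ν := hgc.integrable_of_hasCompactSupport hgs
    have hgsq : Integrable (fun t => g t ^ 2) volume := by
      have heq : (fun t => g t ^ 2) = g * g := by funext t; simp [sq]
      exact (hgc.pow 2).integrable_of_hasCompactSupport
        (by rw [sq]; exact hgs.mul_left (f := g))
    have hgsqnn : 0 ≤ ∫ t, g t ^ 2 := integral_nonneg fun t => sq_nonneg _
    have hgL2 : MemLp g 2 volume :=
      (memLp_two_iff_integrable_sq hgc.aestronglyMeasurable).2 hgsq
    -- Cauchy-Schwarz step
    have CS : ∀ {ε : ℝ}, ε ∈ Set.Ioo (0:ℝ) ε₀ →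
        ∫ t, g t * F ε t ≤ Real.sqrt K * Real.sqrt (∫ t, g t ^ 2) := by
      intro ε hεI
      have hε : 0 < ε := hεI.1
      have hFK : ∫ t, F ε t ^ 2 ≤ K := hK ε hεI
      have hFnn : 0 ≤ ∫ t, F ε t ^ 2 := integral_nonneg fun t => sq_nonneg _
      have hFL2 : MemLp (F ε) 2 volume :=
        (memLp_two_iff_integrable_sq (hFmeas ε).aestronglyMeasurable).2 (hFsq hε)
      have conj : (2:ℝ).HolderConjugate 2 := Real.HolderConjugate.two_two
      have h2 : ENNReal.ofReal (2:ℝ) = 2 := by norm_num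
      have hCS := integral_mul_le_Lp_mul_Lq_of_nonneg conj (ae_of_all _ hg0)
        (ae_of_all _ (hF0 hε)) (by rw [h2]; exact hgL2) (by rw [h2]; exact hFL2)
      have hrw : ∀ u : ℝ → ℝ, (∫ t, u t ^ (2:ℝ)) = ∫ t, u t ^ 2 := by
        intro u
        congr 1
        funext t
        rw [show (2:ℝ) = ((2:ℕ):ℝ) by norm_num, Real.rpow_natCast]
      rw [hrw g, hrw (F ε)] at hCS
      calc ∫ t, g t * F ε t ≤ (∫ t, g t ^ 2) ^ (1/2:ℝ) * (∫ t, F ε t ^ 2) ^ (1/2:ℝ) := hCS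
        _ = Real.sqrt (∫ t, g t ^ 2) * Real.sqrt (∫ t, F ε t ^ 2) := by
            rw [← Real.sqrt_eq_rpow, ← Real.sqrt_eq_rpow]
        _ ≤ Real.sqrt (∫ t, g t ^ 2) * Real.sqrt K := by
            exact mul_le_mul_of_nonneg_left (Real.sqrt_le_sqrt hFK) (Real.sqrt_nonneg _)
        _ = Real.sqrt K * Real.sqrt (∫ t, g t ^ 2) := mul_comm _ _
    -- integrability of translated mollifier against volume
    have hΦtr2_comp : ∀ {ε : ℝ}, 0 < ε → ∀ s : ℝ,
        HasCompactSupport (fun t : ℝ => Φ ε (t - s)) := by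
      intro ε hε s
      apply HasCompactSupport.intro (isCompact_Icc (a := s - ε) (b := s + ε))
      intro t ht
      apply hΦsupp hε
      simp only [Set.mem_Icc, not_and_or, not_le] at ht
      rcases ht with hlt | hlt
      · rw [abs_of_neg (show t - s < 0 by linarith)]; linarith
      · rw [abs_of_pos (show (0:ℝ) < t - s by linarith)]; linarith
    have hΦtr2_int : ∀ {ε : ℝ}, 0 < ε → ∀ s : ℝ,
        Integrable (fun t : ℝ => Φ ε (t - s)) volume := fun {ε} hε s =>
      ((hΦcont ε).comp (continuous_id.sub continuous_const)).integrable_of_hasCompactSupport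
        (hΦtr2_comp hε s)
    have hΦtr2_total : ∀ {ε : ℝ}, 0 < ε → ∀ s : ℝ, ∫ t, Φ ε (t - s) = 1 := by
      intro ε hε s
      rw [integral_sub_right_eq_self (Φ ε) s]
      exact hΦint hε
    -- now the approximation argument
    refine le_of_forall_pos_le_add ?_
    intro θ hθ
    set N : ℝ := (ν Set.univ).toReal + 1 with hNdef
    have hNpos : 0 < N := by positivity
    have hUC : UniformContinuous g :=
      hgc.uniformContinuous_of_tendsto_cocompact hgs.is_zero_at_infty
    obtain ⟨δ, hδ0, hδ⟩ := Metric.uniformContinuous_iff.1 hUC (θ/N) (by positivity)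
    set ε : ℝ := min δ ε₀ / 2 with hεdef
    have hε : 0 < ε := by positivity
    have hεδ : ε < δ := by
      have h1 : ε ≤ δ / 2 := by
        rw [hεdef]; linarith [min_le_left δ ε₀]
      linarith
    have hεI : ε ∈ Set.Ioo (0:ℝ) ε₀ := by
      refine ⟨hε, ?_⟩
      have h1 : ε ≤ ε₀ / 2 := by
        rw [hεdef]; linarith [min_le_right δ ε₀]
      linarith
    set h : ℝ → ℝ := fun s => ∫ t, g t * Φ ε (t - s) with hhdef
    have hint1 : ∀ s : ℝ, Integrable (fun t => g t * Φ ε (t - s)) volume := fun s =>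
      Integrable.bdd_mul (hΦtr2_int hε s) hgc.aestronglyMeasurable (ae_of_all _ hCg)
    have hint2 : ∀ s : ℝ, Integrable (fun t => g s * Φ ε (t - s)) volume := fun s =>
      (hΦtr2_int hε s).const_mul _
    have ha : ∀ s : ℝ, |h s - g s| ≤ θ / N := by
      intro s
      have h1 : g s = ∫ t, g s * Φ ε (t - s) := by
        rw [integral_const_mul, hΦtr2_total hε s, mul_one]
      have heq : h s - g s = ∫ t, (g t - g s) * Φ ε (t - s) := by
        calc h s - g s = (∫ t, g t * Φ ε (t - s)) - ∫ t, g s * Φ ε (t - s) := by rw [← h1]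
          _ = ∫ t, (g t * Φ ε (t - s) - g s * Φ ε (t - s)) :=
              (integral_sub (hint1 s) (hint2 s)).symm
          _ = ∫ t, (g t - g s) * Φ ε (t - s) := by
              congr 1; funext t; ring
      rw [heq, ← Real.norm_eq_abs]
      have hptw : ∀ t : ℝ, ‖(g t - g s) * Φ ε (t - s)‖ ≤ (θ/N) * Φ ε (t - s) := by
        intro t
        rw [norm_mul, Real.norm_of_nonneg (hΦ0 hε _)]
        by_cases hts : |t - s| < ε
        · apply mul_le_mul_of_nonneg_right _ (hΦ0 hε _)
          have hd : dist t s < δ := by rw [Real.dist_eq]; linarith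
          have := hδ hd
          rw [Real.dist_eq] at this
          exact (le_of_lt (by rwa [Real.norm_eq_abs]))
        · rw [hΦsupp hε (not_lt.1 hts)]
          simp
      calc ‖∫ t, (g t - g s) * Φ ε (t - s)‖ ≤ ∫ t, (θ/N) * Φ ε (t - s) :=
            norm_integral_le_of_norm_le ((hΦtr2_int hε s).const_mul _) (ae_of_all _ hptw)
        _ = θ/N := by rw [integral_const_mul, hΦtr2_total hε s, mul_one]
    have hhmeas : StronglyMeasurable h := by
      apply MeasureTheory.StronglyMeasurable.integral_prod_right'
        (f := fun p : ℝ × ℝ => g p.2 * Φ ε (p.2 - p.1))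
      exact ((hgc.comp continuous_snd).mul
        ((hΦcont ε).comp (continuous_snd.sub continuous_fst))).stronglyMeasurable
    have hhint : Integrable h ν := by
      apply Integrable.mono' (integrable_const (Cg + θ/N)) hhmeas.aestronglyMeasurable
      apply ae_of_all
      intro s
      have := ha s
      have h2 := hCg s
      rw [Real.norm_eq_abs] at h2 ⊢
      have : |h s| - |g s| ≤ |h s - g s| := by
        have := abs_sub_abs_le_abs_sub (h s) (g s)
        linarith
      linarith [ha s]
    have hb : ∫ s, g s ∂ν ≤ ∫ s, h s ∂ν + (θ/N) * (ν Set.univ).toReal := by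
      have hmono : ∫ s, g s ∂ν ≤ ∫ s, (h s + θ/N) ∂ν := by
        apply integral_mono hgν (hhint.add (integrable_const _))
        intro s
        have := ha s
        have := abs_sub_abs_le_abs_sub (h s) (g s)
        have habs := abs_le.1 (ha s)
        show g s ≤ h s + θ / N
        linarith [habs.1]
      rwa [integral_add hhint (integrable_const _), integral_const, smul_eq_mul, mul_comm] at hmono
    have hc : ∫ s, h s ∂ν = ∫ t, g t * F ε t := by
      have hintp : Integrable (Function.uncurry fun s t => g t * Φ ε (t - s)) (ν.prod volume) := by
        have := Integrable.bdd_mul (hprodν hε)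
          ((hgc.comp continuous_snd).aestronglyMeasurable) (ae_of_all _ fun p => hCg p.2)
        exact this
      calc ∫ s, h s ∂ν = ∫ t, ∫ s, g t * Φ ε (t - s) ∂ν := integral_integral_swap hintp
        _ = ∫ t, g t * F ε t := by
            congr 1
            funext t
            rw [integral_const_mul]
    have hfinal : (θ/N) * (ν Set.univ).toReal ≤ θ := by
      have h1 : (ν Set.univ).toReal ≤ N := by rw [hNdef]; linarith
      calc (θ/N) * (ν Set.univ).toReal ≤ (θ/N) * N :=
            mul_le_mul_of_nonneg_left h1 (by positivity)
        _ = θ := by field_simp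
    calc ∫ s, g s ∂ν ≤ ∫ s, h s ∂ν + (θ/N) * (ν Set.univ).toReal := hb
      _ = (∫ t, g t * F ε t) + (θ/N) * (ν Set.univ).toReal := by rw [hc]
      _ ≤ Real.sqrt K * Real.sqrt (∫ t, g t ^ 2) + θ :=
          add_le_add (CS hεI) hfinal
  -- bound for compact sets inside open sets
  have compact_bd : ∀ (Kc U : Set ℝ), IsCompact Kc → IsOpen U → Kc ⊆ U →
      volume U ≠ ⊤ → ν Kc ≤ ENNReal.ofReal (Real.sqrt K * Real.sqrt (volume U).toReal) := by
    intro Kc U hKcpt hUopen hKU hUvol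
    obtain ⟨g, hg1, hg0', hgcs, hgmem⟩ := exists_continuous_one_zero_of_isCompact hKcpt
      hUopen.isClosed_compl (Set.disjoint_left.mpr fun x hx hxc => hxc (hKU hx))
    have hgcont : Continuous (g : ℝ → ℝ) := g.continuous
    have hgnn : ∀ x, 0 ≤ g x := fun x => (hgmem x).1
    have hgle1 : ∀ x, g x ≤ 1 := fun x => (hgmem x).2
    have h1 : (ν Kc).toReal ≤ ∫ s, (g : ℝ → ℝ) s ∂ν := by
      have hmono : ∫ s, Set.indicator Kc (fun _ => (1:ℝ)) s ∂ν ≤ ∫ s, (g : ℝ → ℝ) s ∂ν := by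
        apply integral_mono ((integrable_const (1:ℝ)).indicator hKcpt.measurableSet)
          (hgcont.integrable_of_hasCompactSupport hgcs)
        intro s
        by_cases hs : s ∈ Kc
        · rw [Set.indicator_of_mem hs]
          exact le_of_eq (hg1 hs).symm
        · rw [Set.indicator_of_notMem hs]
          exact hgnn s
      rwa [integral_indicator_const (1:ℝ) hKcpt.measurableSet, smul_eq_mul, mul_one] at hmono
    have h2 : ∫ t, (g : ℝ → ℝ) t ^ 2 ≤ (volume U).toReal := by
      have hind : Integrable (Set.indicator U fun _ => (1:ℝ)) volume := by
        rw [integrable_indicator_iff hUopen.measurableSet]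
        exact integrableOn_const hUvol
      have hgsq : Integrable (fun t => (g : ℝ → ℝ) t ^ 2) volume := by
        have heq : (fun t => (g : ℝ → ℝ) t ^ 2) = (g : ℝ → ℝ) * g := by
          funext t; simp [sq]
        exact (hgcont.pow 2).integrable_of_hasCompactSupport
          (by rw [sq]; exact hgcs.mul_left (f := (g : ℝ → ℝ)))
      have hmono : ∫ t, (g : ℝ → ℝ) t ^ 2 ≤ ∫ t, Set.indicator U (fun _ => (1:ℝ)) t := by
        apply integral_mono hgsq hind
        intro t
        by_cases ht : t ∈ U
        · rw [Set.indicator_of_mem ht]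
          exact pow_le_one₀ (hgnn t) (hgle1 t)
        · rw [Set.indicator_of_notMem ht]
          show (g : ℝ → ℝ) t ^ 2 ≤ 0
          simp [hg0' ht]
      rwa [integral_indicator_const (1:ℝ) hUopen.measurableSet, smul_eq_mul, mul_one] at hmono
    have h4 : (ν Kc).toReal ≤ Real.sqrt K * Real.sqrt (volume U).toReal := by
      refine le_trans (h1.trans (key g hgcont hgcs hgnn)) ?_
      exact mul_le_mul_of_nonneg_left (Real.sqrt_le_sqrt h2) (Real.sqrt_nonneg _)
    rw [← ENNReal.ofReal_toReal (measure_ne_top ν Kc)]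
    exact ENNReal.ofReal_le_ofReal h4
  -- absolute continuity
  have hac : ν ≪ volume := by
    apply Measure.AbsolutelyContinuous.mk
    intro A hA hA0
    have hKc0 : ∀ Kc : Set ℝ, Kc ⊆ A → IsCompact Kc → ν Kc = 0 := by
      intro Kc hKA hKcpt
      have hseq : ∀ n : ℕ, ν Kc ≤ ENNReal.ofReal (Real.sqrt K * Real.sqrt (1/((n:ℝ)+1))) := by
        intro n
        have hpos : (0:ENNReal) < ENNReal.ofReal (1/((n:ℝ)+1)) := by
          rw [ENNReal.ofReal_pos]; positivity
        obtain ⟨U, hAU, hUopen, hUlt⟩ := Set.exists_isOpen_lt_of_lt A _ (by rw [hA0]; exact hpos)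
        have hUtop : volume U ≠ ⊤ := (hUlt.trans_le le_top).ne
        have hUle : (volume U).toReal ≤ 1/((n:ℝ)+1) :=
          ENNReal.toReal_le_of_le_ofReal (by positivity) hUlt.le
        calc ν Kc ≤ ENNReal.ofReal (Real.sqrt K * Real.sqrt (volume U).toReal) :=
              compact_bd Kc U hKcpt hUopen (hKA.trans hAU) hUtop
          _ ≤ ENNReal.ofReal (Real.sqrt K * Real.sqrt (1/((n:ℝ)+1))) :=
              ENNReal.ofReal_le_ofReal
                (mul_le_mul_of_nonneg_left (Real.sqrt_le_sqrt hUle) (Real.sqrt_nonneg _))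
      refine le_antisymm ?_ zero_le
      have htend : Filter.Tendsto
          (fun n : ℕ => ENNReal.ofReal (Real.sqrt K * Real.sqrt (1/((n:ℝ)+1))))
          Filter.atTop (nhds 0) := by
        rw [show (0:ENNReal) = ENNReal.ofReal 0 by simp]
        apply ENNReal.tendsto_ofReal
        have h0 : Filter.Tendsto (fun n : ℕ => 1/((n:ℝ)+1)) Filter.atTop (nhds 0) :=
          tendsto_one_div_add_atTop_nhds_zero_nat
        have hs := (Real.continuous_sqrt.tendsto 0).comp h0
        rw [Real.sqrt_zero] at hs
        have := hs.const_mul (Real.sqrt K)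
        simpa using this
      exact ge_of_tendsto' htend hseq
    rw [hA.measure_eq_iSup_isCompact]
    refine le_antisymm ?_ zero_le
    refine iSup_le fun Kc => iSup_le fun hKA => iSup_le fun hKcpt => ?_
    exact (hKc0 Kc hKA hKcpt).le
  -- the density
  have main2 : ∃ f : ℝ → ℝ, MemLp f 2 volume ∧
      ν = volume.withDensity (fun t => ENNReal.ofReal (f t)) := by
    set f : ℝ → ℝ := fun t => (ν.rnDeriv volume t).toReal with hfdef
    set f0 : ℝ → NNReal := fun t => (ν.rnDeriv volume t).toNNReal with hf0def
    have hf_meas : Measurable f := (Measure.measurable_rnDeriv ν volume).ennreal_toReal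
    have hf0_meas : Measurable f0 := (Measure.measurable_rnDeriv ν volume).ennreal_toNNReal
    have hf_int : Integrable f volume := Measure.integrable_toReal_rnDeriv
    have hν_eq : ν = volume.withDensity (fun t => (f0 t : ENNReal)) := by
      conv_lhs => rw [← Measure.withDensity_rnDeriv_eq ν volume hac]
      apply withDensity_congr_ae
      filter_upwards [Measure.rnDeriv_lt_top ν volume] with t ht
      exact (ENNReal.coe_toNNReal ht.ne).symm
    have hofReal : (fun t => ENNReal.ofReal (f t)) = fun t => (f0 t : ENNReal) := by
      funext t
      simp [hfdef, hf0def, ENNReal.ofReal, ENNReal.toReal, Real.toNNReal_coe]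
    have hF_eq : ∀ {ε : ℝ}, 0 < ε → ∀ x : ℝ, F ε x = ∫ s, f s * Φ ε (x - s) := by
      intro ε hε x
      show (∫ s, Φ ε (x - s) ∂ν) = _
      conv_lhs => rw [hν_eq]
      rw [integral_withDensity_eq_integral_smul hf0_meas]
      congr 1
    -- mollifier translates (against volume) at a fixed point
    have hΦtr3_int : ∀ {ε : ℝ}, 0 < ε → ∀ x : ℝ,
        Integrable (fun s : ℝ => Φ ε (x - s)) volume := fun {ε} hε x =>
      (hΦtr_cont ε x).integrable_of_hasCompactSupport (hΦtr_comp hε x)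
    have hΦtr3_total : ∀ {ε : ℝ}, 0 < ε → ∀ x : ℝ, ∫ s, Φ ε (x - s) = 1 := by
      intro ε hε x
      rw [integral_sub_left_eq_self (Φ ε) volume x]
      exact hΦint hε
    -- the sequence of mollification parameters
    set εseq : ℕ → ℝ := fun n => ε₀ / (n + 2) with hεseqdef
    have hεseq_mem : ∀ n : ℕ, εseq n ∈ Set.Ioo (0:ℝ) ε₀ := by
      intro n
      constructor
      · rw [hεseqdef]; positivity
      · rw [hεseqdef]
        rw [div_lt_iff₀ (by positivity)]
        nlinarith [Nat.cast_nonneg (α := ℝ) n]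
    have hεseq_tendsto : Filter.Tendsto εseq Filter.atTop (nhdsWithin 0 (Set.Ioi 0)) := by
      rw [tendsto_nhdsWithin_iff]
      constructor
      · have h1 : Filter.Tendsto (fun n : ℕ => ((n:ℝ)+2)) Filter.atTop Filter.atTop :=
          Filter.tendsto_atTop_add_const_right _ 2 tendsto_natCast_atTop_atTop
        have h2 : Filter.Tendsto (fun n : ℕ => ((n:ℝ)+2)⁻¹) Filter.atTop (nhds 0) :=
          h1.inv_tendsto_atTop
        have h3 := h2.const_mul ε₀
        simp only [mul_zero] at h3
        simpa [hεseqdef, div_eq_mul_inv] using h3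
      · exact Filter.Eventually.of_forall fun n => (hεseq_mem n).1
    -- a.e. convergence of the mollifications to f
    have hae : ∀ᵐ x ∂(volume : Measure ℝ),
        Filter.Tendsto (fun n => F (εseq n) x) Filter.atTop (nhds (f x)) := by
      filter_upwards [IsUnifLocDoublingMeasure.ae_tendsto_average_norm_sub
        (μ := (volume : Measure ℝ)) hf_int.locallyIntegrable 1] with x hx
      have hav := hx (fun _ => x) εseq hεseq_tendsto
        (Filter.Eventually.of_forall fun j =>
          Metric.mem_closedBall_self (by positivity))
      -- key pointwise bound
      have hkey : ∀ {ε : ℝ}, 0 < ε → |F ε x - f x| ≤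
          2*C*(⨍ y in Metric.closedBall x ε, ‖f y - f x‖ ∂volume) := by
        intro ε hε
        have hint_fΦ : Integrable (fun s => f s * Φ ε (x - s)) volume := by
          have := Integrable.bdd_mul hf_int ((hΦtr_cont ε x).aestronglyMeasurable)
            (ae_of_all _ fun s => by
              rw [Real.norm_of_nonneg (hΦ0 hε _)]; exact hΦbdd hε _)
          simpa [mul_comm] using this
        have h1 : ∫ s, f x * Φ ε (x - s) = f x := by
          rw [integral_const_mul, hΦtr3_total hε x, mul_one]
        have heq : F ε x - f x = ∫ s, (f s - f x) * Φ ε (x - s) := by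
          have h2 : F ε x - f x = (∫ s, f s * Φ ε (x - s)) - ∫ s, f x * Φ ε (x - s) := by
            rw [hF_eq hε x, h1]
          rw [h2, ← integral_sub hint_fΦ ((hΦtr3_int hε x).const_mul _)]
          exact integral_congr_ae (Filter.Eventually.of_forall fun s => by ring)
        have hmaj : ∀ s, ‖(f s - f x) * Φ ε (x - s)‖ ≤
            Set.indicator (Metric.closedBall x ε) (fun s => ε⁻¹*C*‖f s - f x‖) s := by
          intro s
          by_cases hs : |x - s| < ε
          · have hmem : s ∈ Metric.closedBall x ε := by
              rw [Metric.mem_closedBall, Real.dist_eq, abs_sub_comm]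
              exact hs.le
            rw [Set.indicator_of_mem hmem, norm_mul, Real.norm_of_nonneg (hΦ0 hε _),
              mul_comm (ε⁻¹*C) _]
            exact mul_le_mul_of_nonneg_left (hΦbdd hε _) (norm_nonneg _)
          · rw [hΦsupp hε (not_lt.1 hs)]
            simp only [mul_zero, norm_zero]
            exact Set.indicator_nonneg (fun s _ => by positivity) s
        have hmaj_int : Integrable
            (Set.indicator (Metric.closedBall x ε) fun s => ε⁻¹*C*‖f s - f x‖) volume := by
          rw [integrable_indicator_iff measurableSet_closedBall]
          exact ((hf_int.integrableOn.sub
            (integrableOn_const measure_closedBall_lt_top.ne)).norm.const_mul _)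
        have havg : ∫ s in Metric.closedBall x ε, ‖f s - f x‖ ∂volume
            = (2*ε) * ⨍ y in Metric.closedBall x ε, ‖f y - f x‖ ∂volume := by
          rw [setAverage_eq, smul_eq_mul, Real.volume_real_closedBall (by positivity)]
          rw [← mul_assoc, mul_inv_cancel₀ (by positivity), one_mul]
        calc |F ε x - f x| = ‖∫ s, (f s - f x) * Φ ε (x - s)‖ := by
              rw [heq, Real.norm_eq_abs]
          _ ≤ ∫ s, Set.indicator (Metric.closedBall x ε) (fun s => ε⁻¹*C*‖f s - f x‖) s :=
              norm_integral_le_of_norm_le hmaj_int (ae_of_all _ hmaj)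
          _ = ε⁻¹*C * ∫ s in Metric.closedBall x ε, ‖f s - f x‖ ∂volume := by
              rw [integral_indicator measurableSet_closedBall, integral_const_mul]
          _ = 2*C*(⨍ y in Metric.closedBall x ε, ‖f y - f x‖ ∂volume) := by
              rw [havg, ← mul_assoc]
              congr 1
              field_simp
      have habs : Filter.Tendsto (fun n => |F (εseq n) x - f x|) Filter.atTop (nhds 0) := by
        apply squeeze_zero (fun n => abs_nonneg _) (fun n => hkey (hεseq_mem n).1)
        have := hav.const_mul (2*C)
        simpa using this
      rw [← tendsto_sub_nhds_zero_iff]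
      have h1 : Filter.Tendsto (fun n => ‖F (εseq n) x - f x‖) Filter.atTop (nhds 0) := by
        simpa [Real.norm_eq_abs] using habs
      exact squeeze_zero_norm (fun n => le_refl _) h1
    -- Fatou
    have hlim : ∫⁻ x, ENNReal.ofReal (f x ^ 2) ∂volume ≤ ENNReal.ofReal K := by
      have hmeasn : ∀ n, Measurable fun x => ENNReal.ofReal (F (εseq n) x ^ 2) :=
        fun n => (((hFmeas (εseq n)).measurable).pow_const 2).ennreal_ofReal
      have hboundn : ∀ n, ∫⁻ x, ENNReal.ofReal (F (εseq n) x ^ 2) ∂volume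
          ≤ ENNReal.ofReal K := by
        intro n
        rw [← ofReal_integral_eq_lintegral_ofReal (hFsq (hεseq_mem n).1)
          (ae_of_all _ fun t => sq_nonneg _)]
        exact ENNReal.ofReal_le_ofReal (hK _ (hεseq_mem n))
      have hliminf : ∀ᵐ x ∂(volume : Measure ℝ), ENNReal.ofReal (f x ^ 2)
          = Filter.liminf (fun n => ENNReal.ofReal (F (εseq n) x ^ 2)) Filter.atTop := by
        filter_upwards [hae] with x hx
        have ht : Filter.Tendsto (fun n => ENNReal.ofReal (F (εseq n) x ^ 2))
            Filter.atTop (nhds (ENNReal.ofReal (f x ^ 2))) :=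
          (ENNReal.continuous_ofReal.tendsto _).comp (hx.pow 2)
        exact ht.liminf_eq.symm
      calc ∫⁻ x, ENNReal.ofReal (f x ^ 2) ∂volume
          = ∫⁻ x, Filter.liminf (fun n => ENNReal.ofReal (F (εseq n) x ^ 2))
              Filter.atTop ∂volume := lintegral_congr_ae hliminf
        _ ≤ Filter.liminf (fun n => ∫⁻ x, ENNReal.ofReal (F (εseq n) x ^ 2) ∂volume)
              Filter.atTop := lintegral_liminf_le hmeasn
        _ ≤ Filter.liminf (fun _ : ℕ => ENNReal.ofReal K) Filter.atTop :=
              Filter.liminf_le_liminf (Filter.Eventually.of_forall hboundn)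
        _ = ENNReal.ofReal K := Filter.liminf_const _
    have hsq_int : Integrable (fun x => f x ^ 2) volume := by
      refine ⟨(hf_meas.pow_const 2).aestronglyMeasurable, ?_⟩
      have heq : ∀ x : ℝ, (‖f x ^ 2‖₊ : ENNReal) = ENNReal.ofReal (f x ^ 2) := fun x =>
        (Real.enorm_eq_ofReal (sq_nonneg _))
      refine lt_of_le_of_lt ?_ (lt_of_le_of_lt hlim ENNReal.ofReal_lt_top)
      refine le_of_eq (lintegral_congr fun x => ?_)
      exact heq x
    exact ⟨f, (memLp_two_iff_integrable_sq hf_meas.aestronglyMeasurable).2 hsq_int,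
      by rw [hofReal]; exact hν_eq⟩
  refine ⟨hac, main2, ?_⟩
  intro S hS hν0 hνSc
  by_contra h
  push_neg at h
  have hS0 : volume S = 0 := le_antisymm h zero_le
  have hνS : ν S = 0 := hac hS0
  apply hν0
  have : ν Set.univ = 0 := by
    have := measure_union_le (μ := ν) S Sᶜ
    rw [Set.union_compl_self, hνS, hνSc] at this
    simpa using this
  exact Measure.measure_univ_eq_zero.mp this
end

section
/- Suppose that the following two results hold: (i) Liu's bound dim_H(Δ(E)) ≥ min(4·dim_H(E)/3 − 2/3, 1) for compact E ⊂ ℝ² with dim_H(E) > 1, and (ii) the main theorem: for compact A, B, C ⊂ ℝ with dim_H(A) + dim_H(B) + dim_H(C) > 2, the set {(a−b)² + c : a ∈ A, b ∈ B, c ∈ C} has positive Lebesgue measure. Then for any compact A ⊂ ℝ with dim_H(A) > 4/7, the distance set Δ(A × A × A) = {|p − q| : p, q ∈ A³} has positive Lebesgue measure. -/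
open MeasureTheory Set ENNReal NNReal
open scoped Classical

lemma cube_compact {A : Set ℝ} (hA : IsCompact A) (m : ℕ) :
    IsCompact {p : EuclideanSpace ℝ (Fin m) | ∀ i, p i ∈ A} := by
  have hK : IsCompact (Set.univ.pi fun _ : Fin m => A) := isCompact_univ_pi fun _ => hA
  have himg : {p : EuclideanSpace ℝ (Fin m) | ∀ i, p i ∈ A}
      = (PiLp.continuousLinearEquiv 2 ℝ (fun _ : Fin m => ℝ)).symm ''
          (Set.univ.pi fun _ : Fin m => A) := by
    ext p
    constructor
    · intro hp
      exact ⟨(PiLp.continuousLinearEquiv 2 ℝ (fun _ : Fin m => ℝ)) p,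
        by simpa [Set.mem_pi] using hp, by simp⟩
    · rintro ⟨f, hf, rfl⟩
      intro i
      simpa [Set.mem_pi] using hf i (Set.mem_univ i)
  rw [himg]
  exact hK.image (PiLp.continuousLinearEquiv 2 ℝ (fun _ : Fin m => ℝ)).symm.continuous

noncomputable def hcont (d : ℝ) : OuterMeasure ℝ :=
  OuterMeasure.boundedBy fun t => EMetric.diam t ^ d

lemma hcont_le_diam (d : ℝ) (S : Set ℝ) : hcont d S ≤ EMetric.diam S ^ d :=
  OuterMeasure.boundedBy_le S

lemma hausdorff_eq_zero_of_hcont {d : ℝ≥0} (hd : 0 < d) {S : Set ℝ}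
    (h : hcont (d : ℝ) S = 0) : μH[(d : ℝ)] S = 0 := by
  rw [MeasureTheory.Measure.hausdorffMeasure_apply]
  refine le_antisymm ?_ bot_le
  refine iSup₂_le fun r hr => ?_
  refine ENNReal.le_of_forall_pos_le_add fun ε hε _ => ?_
  rw [zero_add]
  set ε' : ℝ≥0∞ := min (↑ε) (r ^ (d : ℝ)) with hε'def
  have hε' : 0 < ε' := lt_min (by exact_mod_cast hε) (ENNReal.rpow_pos_of_nonneg hr (by positivity))
  have h0 : (⨅ (t : ℕ → Set ℝ) (_ : S ⊆ iUnion t),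
      ∑' n, ⨆ _ : (t n).Nonempty, EMetric.diam (t n) ^ (d : ℝ)) < ε' := by
    rw [hcont, OuterMeasure.boundedBy_apply] at h
    rw [h]; exact hε'
  obtain ⟨f, hf⟩ := iInf_lt_iff.mp h0
  by_cases hcov : S ⊆ iUnion f
  · rw [iInf_pos hcov] at hf
    have hdiam : ∀ n, EMetric.diam (f n) ≤ r := by
      intro n
      rcases (f n).eq_empty_or_nonempty with he | hne
      · simp [he, EMetric.diam]
      · have h1 : EMetric.diam (f n) ^ (d : ℝ) ≤
            ∑' n, ⨆ _ : (f n).Nonempty, EMetric.diam (f n) ^ (d : ℝ) := by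
          refine le_trans ?_ (ENNReal.le_tsum n)
          simp [hne]
        have h2 : EMetric.diam (f n) ^ (d : ℝ) < r ^ (d : ℝ) :=
          lt_of_le_of_lt h1 (lt_of_lt_of_le hf (min_le_right _ _))
        by_contra hlt
        push_neg at hlt
        exact absurd (ENNReal.rpow_le_rpow hlt.le (by positivity)) (not_le.mpr h2)
    calc (⨅ (t : ℕ → Set ℝ) (_ : S ⊆ ⋃ n, t n) (_ : ∀ n, EMetric.diam (t n) ≤ r),
          ∑' n, ⨆ _ : (t n).Nonempty, EMetric.diam (t n) ^ (d : ℝ))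
        ≤ ∑' n, ⨆ _ : (f n).Nonempty, EMetric.diam (f n) ^ (d : ℝ) := by
          exact iInf₂_le_of_le f hcov (iInf_le_of_le hdiam le_rfl)
      _ ≤ ε' := hf.le
      _ ≤ ↑ε := min_le_left _ _
  · rw [iInf_neg hcov] at hf
    exact absurd hf (by simp [hε'def, lt_min_iff])

lemma hcont_pos {d : ℝ≥0} (hd : 0 < d) {S : Set ℝ} (h : (d : ℝ≥0∞) < dimH S) :
    0 < hcont (d : ℝ) S := by
  rcases eq_or_lt_of_le (bot_le (a := hcont (d : ℝ) S)) with h0 | h0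
  · exfalso
    have := hausdorff_eq_zero_of_hcont hd h0.symm
    rw [hausdorffMeasure_of_lt_dimH h] at this
    simp at this
  · exact h0



lemma exists_frostman {A : Set ℝ} (hA : IsCompact A) (hne : A.Nonempty) {s : ℝ≥0}
    (hs0 : 0 < s) (hc0 : 0 < hcont (s : ℝ) A) :
    ∃ μ : Measure ℝ, 0 < μ A ∧ μ A ≠ ∞ ∧ ∀ E : Set ℝ, μ E ≤ EMetric.diam E ^ (s : ℝ) := by
  have hs0' : (0 : ℝ) < s := hs0
  have hAdiam : EMetric.diam A ≠ ∞ := hA.isBounded.ediam_ne_top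
  have hc0top : hcont (s : ℝ) A ≠ ∞ :=
    ne_top_of_le_ne_top (ENNReal.rpow_ne_top_of_nonneg hs0'.le hAdiam) (hcont_le_diam _ _)
  -- The CDF of the Hausdorff content
  set F : ℝ → ℝ := fun x => (hcont (s : ℝ) (A ∩ Iic x)).toReal with hFdef
  have hfin : ∀ x, hcont (s : ℝ) (A ∩ Iic x) ≠ ∞ := fun x =>
    ne_top_of_le_ne_top hc0top ((hcont (s : ℝ)).mono inter_subset_left)
  have hFmono : Monotone F := by
    intro x y hxy
    exact ENNReal.toReal_mono (hfin y)
      ((hcont (s : ℝ)).mono (inter_subset_inter_right _ (Iic_subset_Iic.mpr hxy)))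
  have hFholder : ∀ a b : ℝ, a ≤ b → F b ≤ F a + (b - a) ^ (s : ℝ) := by
    intro a b hab
    have hsub : A ∩ Iic b ⊆ (A ∩ Iic a) ∪ (A ∩ Ioc a b) := by
      rintro x ⟨hxA, hxb⟩
      rcases le_or_gt x a with h | h
      · exact Or.inl ⟨hxA, h⟩
      · exact Or.inr ⟨hxA, h, hxb⟩
    have h1 : hcont (s : ℝ) (A ∩ Iic b) ≤
        hcont (s : ℝ) (A ∩ Iic a) + ENNReal.ofReal ((b - a) ^ (s : ℝ)) := by
      refine le_trans ((hcont (s : ℝ)).mono hsub) (le_trans (measure_union_le (μ := hcont (s:ℝ)) _ _) ?_)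
      gcongr
      refine le_trans (hcont_le_diam _ _) ?_
      have hd : EMetric.diam (A ∩ Ioc a b) ≤ ENNReal.ofReal (b - a) := by
        refine le_trans (EMetric.diam_mono (inter_subset_right.trans Ioc_subset_Icc_self)) ?_
        rw [Real.ediam_Icc]
      calc EMetric.diam (A ∩ Ioc a b) ^ (s : ℝ)
          ≤ ENNReal.ofReal (b - a) ^ (s : ℝ) := ENNReal.rpow_le_rpow hd hs0'.le
        _ = ENNReal.ofReal ((b - a) ^ (s : ℝ)) :=
            ENNReal.ofReal_rpow_of_nonneg (by linarith) hs0'.le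
    have := ENNReal.toReal_mono (by
        exact ENNReal.add_ne_top.mpr ⟨hfin a, ENNReal.ofReal_ne_top⟩) h1
    rw [ENNReal.toReal_add (hfin a) ENNReal.ofReal_ne_top,
      ENNReal.toReal_ofReal (Real.rpow_nonneg (by linarith) _)] at this
    exact this
  have hFrc : ∀ x, ContinuousWithinAt F (Ici x) x := by
    intro x
    rw [Metric.continuousWithinAt_iff]
    intro ε hε
    refine ⟨ε ^ (s : ℝ)⁻¹, Real.rpow_pos_of_pos hε _, ?_⟩
    intro y hy hdy
    have hxy : x ≤ y := hy
    have h1 : dist (F y) (F x) = F y - F x := by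
      rw [Real.dist_eq, abs_of_nonneg (by linarith [hFmono hxy])]
    have h2 : dist y x = y - x := by rw [Real.dist_eq, abs_of_nonneg (by linarith)]
    rw [h1]
    have h3 : F y - F x ≤ (y - x) ^ (s : ℝ) := by linarith [hFholder x y hxy]
    have h4 : (y - x) ^ (s : ℝ) < (ε ^ (s : ℝ)⁻¹) ^ (s : ℝ) :=
      Real.rpow_lt_rpow (by linarith) (by rw [← h2]; exact hdy) hs0'
    have h5 : (ε ^ (s : ℝ)⁻¹) ^ (s : ℝ) = ε :=
      Real.rpow_inv_rpow hε.le (by exact_mod_cast hs0.ne')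
    linarith
  set SF : StieltjesFunction ℝ := ⟨F, hFmono, hFrc⟩ with hSFdef
  set μ : Measure ℝ := SF.measure with hμdef
  have hμIoc : ∀ a b : ℝ, μ (Ioc a b) = ENNReal.ofReal (F b - F a) := fun a b =>
    SF.measure_Ioc a b
  -- Frostman growth bound
  have hfrost : ∀ E : Set ℝ, μ E ≤ EMetric.diam E ^ (s : ℝ) := by
    intro E
    rcases E.eq_empty_or_nonempty with rfl | hEne
    · simp
    by_cases hEb : Bornology.IsBounded E
    swap
    · have : EMetric.diam E = ∞ := by
        by_contra hd
        exact hEb (Metric.isBounded_iff_ediam_ne_top.mpr hd)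
      rw [this, ENNReal.top_rpow_of_pos hs0']
      exact le_top
    set a := sInf E with hadef
    set b := sSup E with hbdef
    have hbdd₁ : BddBelow E := hEb.bddBelow
    have hbdd₂ : BddAbove E := hEb.bddAbove
    have hab : a ≤ b := Real.sInf_le_sSup E hbdd₁ hbdd₂
    have hdE : b - a ≤ Metric.diam E := by
      have hb' : b ≤ a + Metric.diam E := by
        refine csSup_le hEne fun x hx => ?_
        have h1 : x - Metric.diam E ≤ a := by
          refine le_csInf hEne fun y hy => ?_
          have := Metric.dist_le_diam_of_mem hEb hx hy
          rw [Real.dist_eq] at this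
          have := abs_le.mp this
          linarith [this.1, this.2]
        linarith
      linarith
    have hkey : ∀ n : ℕ, μ E ≤ ENNReal.ofReal ((Metric.diam E + 1/(n+1)) ^ (s : ℝ)) := by
      intro n
      have hη : (0:ℝ) < 1/(n+1) := by positivity
      have hsub : E ⊆ Ioc (a - 1/(n+1)) b := fun x hx =>
        ⟨by linarith [csInf_le hbdd₁ hx], le_csSup hbdd₂ hx⟩
      calc μ E ≤ μ (Ioc (a - 1/(n+1)) b) := measure_mono hsub
        _ = ENNReal.ofReal (F b - F (a - 1/(n+1))) := hμIoc _ _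
        _ ≤ ENNReal.ofReal ((b - (a - 1/(n+1))) ^ (s : ℝ)) := by
            refine ENNReal.ofReal_le_ofReal ?_
            linarith [hFholder (a - 1/(n+1)) b (by linarith)]
        _ ≤ ENNReal.ofReal ((Metric.diam E + 1/(n+1)) ^ (s : ℝ)) := by
            refine ENNReal.ofReal_le_ofReal ?_
            refine Real.rpow_le_rpow (by linarith) (by linarith) hs0'.le
    have hT : Filter.Tendsto (fun n : ℕ => ENNReal.ofReal ((Metric.diam E + 1/(n+1)) ^ (s : ℝ)))
        Filter.atTop (nhds (ENNReal.ofReal (Metric.diam E ^ (s : ℝ)))) := by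
      have h1 : Filter.Tendsto (fun n : ℕ => Metric.diam E + 1/(n+1)) Filter.atTop
          (nhds (Metric.diam E)) := by
        have := tendsto_one_div_add_atTop_nhds_zero_nat (𝕜 := ℝ)
        have h2 := Filter.Tendsto.add (tendsto_const_nhds (x := Metric.diam E)) this
        simpa using h2
      have h3 : ContinuousAt (fun x : ℝ => ENNReal.ofReal (x ^ (s : ℝ))) (Metric.diam E) := by
        refine ENNReal.continuous_ofReal.continuousAt.comp ?_
        exact Real.continuousAt_rpow_const _ _ (Or.inr hs0'.le)
      exact (h3.tendsto.comp h1)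
    have hlim : μ E ≤ ENNReal.ofReal (Metric.diam E ^ (s : ℝ)) := ge_of_tendsto' hT hkey
    calc μ E ≤ ENNReal.ofReal (Metric.diam E ^ (s : ℝ)) := hlim
      _ = ENNReal.ofReal (Metric.diam E) ^ (s : ℝ) :=
          (ENNReal.ofReal_rpow_of_nonneg Metric.diam_nonneg hs0'.le).symm
      _ = EMetric.diam E ^ (s : ℝ) := by
          rw [Metric.diam, ENNReal.ofReal_toReal hEb.ediam_ne_top]; rfl
  -- support: no mass outside A
  have hIoc0 : ∀ p q : ℝ, A ∩ Ioc p q = ∅ → μ (Ioc p q) = 0 := by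
    intro p q hpq
    rcases le_or_gt q p with h | h
    · rw [Set.Ioc_eq_empty (not_lt.mpr h)]; exact measure_empty
    · rw [hμIoc]
      have : A ∩ Iic q = A ∩ Iic p := by
        ext x
        constructor
        · rintro ⟨hxA, hxq⟩
          refine ⟨hxA, ?_⟩
          by_contra hxp
          rw [Set.mem_Iic, not_le] at hxp
          exact absurd (show x ∈ A ∩ Ioc p q from ⟨hxA, hxp, hxq⟩) (by rw [hpq]; simp)
        · rintro ⟨hxA, hxp⟩; exact ⟨hxA, le_trans hxp h.le⟩
      have hFq : F q = F p := by simp only [hFdef, this]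
      rw [hFq, sub_self, ENNReal.ofReal_zero]
  have hsupp : μ Aᶜ = 0 := by
    set U : ℚ × ℚ → Set ℝ := fun pq =>
      if A ∩ Ioc (pq.1 : ℝ) (pq.2 : ℝ) = ∅ then Ioc (pq.1 : ℝ) (pq.2 : ℝ) else ∅ with hUdef
    have hcov : Aᶜ ⊆ ⋃ pq, U pq := by
      intro x hx
      obtain ⟨ε, hε, hball⟩ := Metric.isOpen_iff.mp hA.isClosed.isOpen_compl x hx
      obtain ⟨p, hp1, hp2⟩ := exists_rat_btwn (show x - ε < x by linarith)
      obtain ⟨q, hq1, hq2⟩ := exists_rat_btwn (show x < x + ε by linarith)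
      have hsub : Ioc (p : ℝ) (q : ℝ) ⊆ Metric.ball x ε := by
        intro y hy
        rw [Metric.mem_ball, Real.dist_eq, abs_lt]
        constructor <;> [linarith [hy.1]; linarith [hy.2]]
      have hdisj : A ∩ Ioc (p : ℝ) (q : ℝ) = ∅ := by
        rw [Set.eq_empty_iff_forall_notMem]
        rintro y ⟨hyA, hyI⟩
        exact (hball (hsub hyI)) hyA
      refine Set.mem_iUnion.mpr ⟨(p, q), ?_⟩
      rw [hUdef]
      simp only [hdisj, if_pos]
      exact ⟨hp2, hq1.le⟩
    refine le_antisymm ?_ bot_le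
    calc μ Aᶜ ≤ μ (⋃ pq, U pq) := measure_mono hcov
      _ ≤ ∑' pq, μ (U pq) := measure_iUnion_le U
      _ = 0 := by
          refine ENNReal.tsum_eq_zero.mpr fun pq => ?_
          simp only [hUdef]
          split_ifs with hd
          · exact hIoc0 _ _ hd
          · exact measure_empty
  -- total mass
  have hmass : hcont (s : ℝ) A ≤ μ A := by
    have hlo : BddBelow A := hA.isBounded.bddBelow
    have hhi : BddAbove A := hA.isBounded.bddAbove
    set lo := sInf A with hlodef
    set hi := sSup A with hhidef
    have h1 : A ∩ Iic hi = A := by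
      refine Set.inter_eq_left.mpr fun x hx => le_csSup hhi hx
    have h2 : A ∩ Iic (lo - 1) = ∅ := by
      rw [Set.eq_empty_iff_forall_notMem]
      rintro x ⟨hxA, hxle⟩
      have h5 : lo ≤ x := csInf_le hlo hxA
      have h6 : x ≤ lo - 1 := hxle
      linarith
    have h3 : μ (Ioc (lo - 1) hi) = hcont (s : ℝ) A := by
      rw [hμIoc]
      have hFhi : F hi = (hcont (s : ℝ) A).toReal := by simp only [hFdef, h1]
      have hFlo : F (lo - 1) = 0 := by
        simp only [hFdef, h2]
        simp
      rw [hFhi, hFlo, sub_zero, ENNReal.ofReal_toReal hc0top]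
    have h4 : μ (Ioc (lo - 1) hi) ≤ μ A + μ Aᶜ := by
      calc μ (Ioc (lo - 1) hi) ≤ μ (A ∪ Aᶜ) := by
            rw [Set.union_compl_self]; exact measure_mono (subset_univ _)
        _ ≤ μ A + μ Aᶜ := measure_union_le _ _
    rw [hsupp, add_zero] at h4
    rw [← h3]
    exact h4
  exact ⟨μ, lt_of_lt_of_le hc0 hmass,
    ne_top_of_le_ne_top (ENNReal.rpow_ne_top_of_nonneg hs0'.le hAdiam) (hfrost A), hfrost⟩

lemma proj_dist_le {m : ℕ} (p q : EuclideanSpace ℝ (Fin m)) (i : Fin m) :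
    dist (p i) (q i) ≤ dist p q := by
  rw [EuclideanSpace.dist_eq]
  have h1 : dist (p i) (q i) ^ 2 ≤ ∑ j, dist (p j) (q j) ^ 2 := by
    apply Finset.single_le_sum (f := fun j => dist (p j) (q j) ^ 2)
    · intro j _; positivity
    · exact Finset.mem_univ i
  calc dist (p i) (q i) = Real.sqrt (dist (p i) (q i) ^ 2) := by
        rw [Real.sqrt_sq dist_nonneg]
    _ ≤ _ := Real.sqrt_le_sqrt h1

lemma cover_sum_ge {A : Set ℝ} (hA : IsCompact A) {μ : Measure ℝ} {s : ℝ≥0} (hs0 : 0 < s)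
    (hfr : ∀ E : Set ℝ, μ E ≤ EMetric.diam E ^ (s : ℝ))
    {δ : ℝ≥0∞} (hδ1 : δ ≤ 1)
    (t : ℕ → Set (EuclideanSpace ℝ (Fin 2)))
    (hcov : {p : EuclideanSpace ℝ (Fin 2) | ∀ i, p i ∈ A} ⊆ ⋃ n, t n)
    (hdiam : ∀ n, EMetric.diam (t n) ≤ δ) :
    (⨅ (f : ℕ → Set ℝ) (_ : A ⊆ ⋃ n, f n) (_ : ∀ n, EMetric.diam (f n) ≤ δ),
        ∑' n, ⨆ _ : (f n).Nonempty, EMetric.diam (f n) ^ (s : ℝ)) * μ A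
      ≤ ∑' n, ⨆ _ : (t n).Nonempty, EMetric.diam (t n) ^ (((s + s : ℝ≥0)) : ℝ) := by
  have hs0' : (0 : ℝ) < s := hs0
  set V : ℕ → Set ℝ := fun n => closure ((fun p : EuclideanSpace ℝ (Fin 2) => p 0) '' t n)
    with hVdef
  set W : ℕ → Set ℝ := fun n => (fun p : EuclideanSpace ℝ (Fin 2) => p 1) '' t n with hWdef
  set g : ℕ → ℝ≥0∞ := fun n => ⨆ _ : (W n).Nonempty, EMetric.diam (W n) ^ (s : ℝ) with hgdef
  have hproj : ∀ (i : Fin 2) (n : ℕ),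
      EMetric.diam ((fun p : EuclideanSpace ℝ (Fin 2) => p i) '' t n) ≤ EMetric.diam (t n) := by
    intro i n
    apply EMetric.diam_le
    rintro x ⟨p, hp, rfl⟩ y ⟨q, hq, rfl⟩
    calc edist (p i) (q i) ≤ edist p q := by
          rw [edist_dist, edist_dist]
          exact ENNReal.ofReal_le_ofReal (proj_dist_le p q i)
      _ ≤ _ := EMetric.edist_le_diam_of_mem hp hq
  have hVdiam : ∀ n, EMetric.diam (V n) ≤ EMetric.diam (t n) := fun n => by
    rw [hVdef]; beta_reduce; rw [EMetric.diam, Metric.ediam_closure]; exact hproj 0 n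
  have hWdiam : ∀ n, EMetric.diam (W n) ≤ EMetric.diam (t n) := fun n => hproj 1 n
  -- pointwise bound on A
  have hpt : ∀ x ∈ A,
      (⨅ (f : ℕ → Set ℝ) (_ : A ⊆ ⋃ n, f n) (_ : ∀ n, EMetric.diam (f n) ≤ δ),
        ∑' n, ⨆ _ : (f n).Nonempty, EMetric.diam (f n) ^ (s : ℝ))
      ≤ ∑' n, (V n).indicator (fun _ => g n) x := by
    intro x hx
    set f : ℕ → Set ℝ := fun n => if x ∈ V n then W n else ∅ with hfdef
    have hfcov : A ⊆ ⋃ n, f n := by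
      intro y hy
      let r : EuclideanSpace ℝ (Fin 2) := WithLp.toLp 2 (fun i => if i = 0 then x else y)
      have hr0 : r 0 = x := by show (if (0 : Fin 2) = 0 then x else y) = x; simp
      have hr1 : r 1 = y := by show (if (1 : Fin 2) = 0 then x else y) = y; simp
      have hr : r ∈ {p : EuclideanSpace ℝ (Fin 2) | ∀ i, p i ∈ A} := by
        intro i
        show (if i = 0 then x else y) ∈ A
        split_ifs <;> assumption
      obtain ⟨n, hn⟩ := Set.mem_iUnion.mp (hcov hr)
      have hxV : x ∈ V n := subset_closure ⟨r, hn, hr0⟩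
      refine Set.mem_iUnion.mpr ⟨n, ?_⟩
      rw [hfdef]
      simp only [hxV, if_pos]
      exact ⟨r, hn, hr1⟩
    have hfdiam : ∀ n, EMetric.diam (f n) ≤ δ := by
      intro n
      simp only [hfdef]
      split_ifs
      · exact le_trans (hWdiam n) (hdiam n)
      · simp [EMetric.diam]
    refine le_trans (iInf₂_le_of_le f hfcov (iInf_le_of_le hfdiam le_rfl)) ?_
    refine ENNReal.tsum_le_tsum fun n => ?_
    by_cases hxV : x ∈ V n
    · simp only [hfdef, hxV, if_pos, Set.indicator_of_mem, hgdef]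
      exact le_rfl
    · simp [hfdef, hxV]
  -- integrate
  have hAmeas : MeasurableSet A := hA.isClosed.measurableSet
  have hmeas : ∀ n, Measurable ((V n).indicator (fun _ => g n)) := fun n =>
    measurable_const.indicator isClosed_closure.measurableSet
  calc (⨅ (f : ℕ → Set ℝ) (_ : A ⊆ ⋃ n, f n) (_ : ∀ n, EMetric.diam (f n) ≤ δ),
        ∑' n, ⨆ _ : (f n).Nonempty, EMetric.diam (f n) ^ (s : ℝ)) * μ A
      = ∫⁻ _ in A, (⨅ (f : ℕ → Set ℝ) (_ : A ⊆ ⋃ n, f n) (_ : ∀ n, EMetric.diam (f n) ≤ δ),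
        ∑' n, ⨆ _ : (f n).Nonempty, EMetric.diam (f n) ^ (s : ℝ)) ∂μ :=
        (setLIntegral_const _ _).symm
    _ ≤ ∫⁻ x in A, (∑' n, (V n).indicator (fun _ => g n) x) ∂μ :=
        setLIntegral_mono (Measurable.ennreal_tsum hmeas) hpt
    _ ≤ ∫⁻ x, (∑' n, (V n).indicator (fun _ => g n) x) ∂μ :=
        setLIntegral_le_lintegral _ _
    _ = ∑' n, ∫⁻ x, (V n).indicator (fun _ => g n) x ∂μ :=
        lintegral_tsum fun n => (hmeas n).aemeasurable
    _ = ∑' n, g n * μ (V n) := by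
        refine tsum_congr fun n => ?_
        rw [lintegral_indicator_const isClosed_closure.measurableSet]
    _ ≤ ∑' n, ⨆ _ : (t n).Nonempty, EMetric.diam (t n) ^ (((s + s : ℝ≥0)) : ℝ) := by
        refine ENNReal.tsum_le_tsum fun n => ?_
        rcases (t n).eq_empty_or_nonempty with he | hne
        · have : W n = ∅ := by rw [hWdef]; simp [he]
          simp [hgdef, this]
        · have htne : (t n).Nonempty := hne
          have hWne : (W n).Nonempty := hne.image _
          rw [iSup_pos htne]
          have hg_le : g n ≤ EMetric.diam (t n) ^ (s : ℝ) := by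
            rw [hgdef]
            simp only [iSup_pos hWne]
            exact ENNReal.rpow_le_rpow (hWdiam n) hs0'.le
          have hμV : μ (V n) ≤ EMetric.diam (t n) ^ (s : ℝ) :=
            le_trans (hfr _) (ENNReal.rpow_le_rpow (hVdiam n) hs0'.le)
          rcases eq_or_ne (EMetric.diam (t n)) 0 with hd0 | hd0
          · have : μ (V n) = 0 := by
              refine le_antisymm (le_trans hμV ?_) bot_le
              rw [hd0, ENNReal.zero_rpow_of_pos hs0']
            simp [this]
          · have hdne : EMetric.diam (t n) ≠ ∞ :=
              ne_top_of_le_ne_top (lt_of_le_of_lt hδ1 one_lt_top).ne (hdiam n)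
            calc g n * μ (V n) ≤ EMetric.diam (t n) ^ (s : ℝ) * EMetric.diam (t n) ^ (s : ℝ) :=
                mul_le_mul' hg_le hμV
              _ = EMetric.diam (t n) ^ (((s + s : ℝ≥0)) : ℝ) := by
                  rw [← ENNReal.rpow_add _ _ hd0 hdne]
                  norm_num

lemma dimH_cube_ge {A : Set ℝ} (hA : IsCompact A) {s : ℝ≥0} (hs0 : 0 < s)
    (hsd : (s : ℝ≥0∞) < dimH A) :
    ((s + s : ℝ≥0) : ℝ≥0∞) ≤ dimH {p : EuclideanSpace ℝ (Fin 2) | ∀ i, p i ∈ A} := by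
  have hne : A.Nonempty := by
    rcases A.eq_empty_or_nonempty with rfl | h
    · rw [dimH_empty] at hsd; simp at hsd
    · exact h
  obtain ⟨μ, hμA, hμfin, hfr⟩ := exists_frostman hA hne hs0 (hcont_pos hs0 hsd)
  refine le_dimH_of_hausdorffMeasure_eq_top (d := s + s) ?_
  set P : ℝ≥0∞ → ℝ≥0∞ := fun r =>
    ⨅ (f : ℕ → Set ℝ) (_ : A ⊆ ⋃ n, f n) (_ : ∀ n, EMetric.diam (f n) ≤ r),
      ∑' n, ⨆ _ : (f n).Nonempty, EMetric.diam (f n) ^ (s : ℝ) with hPdef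
  have hPanti : ∀ r1 r2 : ℝ≥0∞, r1 ≤ r2 → P r2 ≤ P r1 := by
    intro r1 r2 h
    refine le_iInf fun f => le_iInf fun hf => le_iInf fun hd => ?_
    exact iInf₂_le_of_le f hf (iInf_le_of_le (fun n => le_trans (hd n) h) le_rfl)
  have hHs : μH[(s : ℝ)] A = ∞ := hausdorffMeasure_of_lt_dimH hsd
  have hsupP : ∀ M : ℝ≥0∞, M ≠ ∞ → ∃ r : ℝ≥0∞, 0 < r ∧ r ≤ 1 ∧ M < P r := by
    intro M hM
    have happ : μH[(s : ℝ)] A = ⨆ (r : ℝ≥0∞) (_ : 0 < r), P r :=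
      Measure.hausdorffMeasure_apply _ _
    have hlt : M < ⨆ (r : ℝ≥0∞) (_ : 0 < r), P r := by
      rw [← happ, hHs]; exact hM.lt_top
    obtain ⟨r, hr⟩ := lt_iSup_iff.mp hlt
    have hr0 : 0 < r := by
      by_contra h0
      rw [iSup_neg h0] at hr
      simp at hr
    rw [iSup_pos hr0] at hr
    exact ⟨min r 1, lt_min hr0 one_pos, min_le_right _ _,
      lt_of_lt_of_le hr (hPanti _ _ (min_le_left _ _))⟩
  have hmain : ∀ M : ℝ≥0∞, M ≠ ∞ →
      M ≤ μH[(((s + s : ℝ≥0)) : ℝ)] {p : EuclideanSpace ℝ (Fin 2) | ∀ i, p i ∈ A} := by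
    intro M hM
    obtain ⟨r, hr0, hr1, hrP⟩ := hsupP (M / μ A) ((ENNReal.div_lt_top hM hμA.ne').ne)
    rw [Measure.hausdorffMeasure_apply]
    refine le_trans ?_ (le_iSup₂ (f := fun (r : ℝ≥0∞) (_ : 0 < r) =>
      ⨅ (t : ℕ → Set (EuclideanSpace ℝ (Fin 2)))
        (_ : {p : EuclideanSpace ℝ (Fin 2) | ∀ i, p i ∈ A} ⊆ ⋃ n, t n)
        (_ : ∀ n, EMetric.diam (t n) ≤ r),
        ∑' n, ⨆ _ : (t n).Nonempty, EMetric.diam (t n) ^ (((s + s : ℝ≥0)) : ℝ)) r hr0)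
    refine le_iInf fun t => le_iInf fun ht => le_iInf fun hd => ?_
    calc M = (M / μ A) * μ A := (ENNReal.div_mul_cancel hμA.ne' hμfin).symm
      _ ≤ P r * μ A := mul_le_mul_left hrP.le _
      _ ≤ _ := cover_sum_ge hA hs0 hfr hr1 t ht hd
  by_contra htop
  have hne' : μH[(((s + s : ℝ≥0)) : ℝ)] {p : EuclideanSpace ℝ (Fin 2) | ∀ i, p i ∈ A} + 1 ≠ ⊤ :=
    ENNReal.add_ne_top.mpr ⟨htop, ENNReal.one_ne_top⟩
  have h1 := hmain _ hne'
  exact absurd h1 (not_le.mpr (ENNReal.lt_add_right htop one_ne_zero))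

lemma dist_set_compact {X : Type*} [MetricSpace X] {E : Set X} (hE : IsCompact E) :
    IsCompact {d : ℝ | ∃ p ∈ E, ∃ q ∈ E, d = dist p q} := by
  have himg : {d : ℝ | ∃ p ∈ E, ∃ q ∈ E, d = dist p q}
      = (fun z : X × X => dist z.1 z.2) '' (E ×ˢ E) := by
    ext d
    constructor
    · rintro ⟨p, hp, q, hq, rfl⟩; exact ⟨(p, q), ⟨hp, hq⟩, rfl⟩
    · rintro ⟨⟨p, q⟩, ⟨hp, hq⟩, rfl⟩; exact ⟨p, hp, q, hq, rfl⟩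
  rw [himg]
  exact (hE.prod hE).image continuous_dist

lemma sqrt_lipschitzOnWith {c : ℝ} (hc : 0 < c) :
    LipschitzOnWith ((2 * Real.sqrt c)⁻¹.toNNReal) Real.sqrt (Ici c) := by
  rw [lipschitzOnWith_iff_dist_le_mul]
  intro x hx y hy
  have hx' : c ≤ x := hx
  have hy' : c ≤ y := hy
  have hcx : Real.sqrt c ≤ Real.sqrt x := Real.sqrt_le_sqrt hx'
  have hcy : Real.sqrt c ≤ Real.sqrt y := Real.sqrt_le_sqrt hy'
  have hc0 : 0 < Real.sqrt c := Real.sqrt_pos.mpr hc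
  have hx2 : Real.sqrt x ^ 2 = x := Real.sq_sqrt (by linarith)
  have hy2 : Real.sqrt y ^ 2 = y := Real.sq_sqrt (by linarith)
  have h1 : dist (Real.sqrt x) (Real.sqrt y) * (Real.sqrt x + Real.sqrt y) = dist x y := by
    rw [Real.dist_eq, Real.dist_eq,
      ← abs_of_nonneg (show (0:ℝ) ≤ Real.sqrt x + Real.sqrt y by positivity), ← abs_mul]
    congr 1
    linear_combination hx2 - hy2
  have h2 : dist (Real.sqrt x) (Real.sqrt y) * (2 * Real.sqrt c) ≤ dist x y := by
    calc dist (Real.sqrt x) (Real.sqrt y) * (2 * Real.sqrt c)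
        ≤ dist (Real.sqrt x) (Real.sqrt y) * (Real.sqrt x + Real.sqrt y) := by
          refine mul_le_mul_of_nonneg_left (by linarith) dist_nonneg
      _ = dist x y := h1
  rw [Real.coe_toNNReal _ (by positivity)]
  rw [inv_mul_eq_div, le_div_iff₀ (by positivity)]
  linarith

lemma sq_lipschitzOnWith {M : ℝ} (hM : 0 ≤ M) :
    LipschitzOnWith (2 * M).toNNReal (fun x : ℝ => x ^ 2) (Metric.closedBall 0 M) := by
  rw [lipschitzOnWith_iff_dist_le_mul]
  intro x hx y hy
  rw [Metric.mem_closedBall, Real.dist_eq, sub_zero] at hx hy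
  rw [Real.dist_eq, Real.dist_eq, Real.coe_toNNReal _ (by positivity)]
  have h1 : x ^ 2 - y ^ 2 = (x + y) * (x - y) := by ring
  rw [h1, abs_mul]
  have h2 : |x + y| ≤ 2 * M := by
    calc |x + y| ≤ |x| + |y| := abs_add_le x y
      _ ≤ 2 * M := by linarith
  exact mul_le_mul_of_nonneg_right h2 (abs_nonneg _)

theorem distance_set_cube_pos_measure
    (hLiu : ∀ E : Set (EuclideanSpace ℝ (Fin 2)), IsCompact E → 1 < dimH E →
      min (4 * dimH E / 3 - 2/3) 1 ≤ dimH {d : ℝ | ∃ p ∈ E, ∃ q ∈ E, d = dist p q})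
    (hMain : ∀ A B C : Set ℝ, IsCompact A → IsCompact B → IsCompact C →
      2 < dimH A + dimH B + dimH C →
      0 < volume {w : ℝ | ∃ a ∈ A, ∃ b ∈ B, ∃ c ∈ C, w = (a - b)^2 + c}) :
    ∀ A : Set ℝ, IsCompact A → (4/7 : ENNReal) < dimH A →
      0 < volume {d : ℝ |
        ∃ p ∈ {p : EuclideanSpace ℝ (Fin 3) | ∀ i, p i ∈ A},
        ∃ q ∈ {p : EuclideanSpace ℝ (Fin 3) | ∀ i, p i ∈ A}, d = dist p q} := by
  intro A hA hdim
  -- choose an exponent s with 4/7 < s < dimH A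
  have hdim1 : dimH A ≤ 1 := by
    calc dimH A ≤ dimH (univ : Set ℝ) := dimH_mono (subset_univ A)
      _ = 1 := Real.dimH_univ
  obtain ⟨s, hs47, hsd⟩ := ENNReal.lt_iff_exists_nnreal_btwn.mp hdim
  have hs47' : (4/7 : ℝ≥0) < s := by
    have h' : ((4/7 : ℝ≥0) : ℝ≥0∞) < (s : ℝ≥0∞) := by
      rw [ENNReal.coe_div (by norm_num)]
      push_cast
      exact hs47
    exact_mod_cast h'
  have hs47'' : (4/7 : ℝ) < s := hs47'
  have hs1 : s < 1 := by exact_mod_cast lt_of_lt_of_le hsd hdim1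
  have hs1' : (s : ℝ) < 1 := hs1
  have hs0 : 0 < s := lt_trans (by norm_num) hs47'
  have hss2 : (s + s : ℝ≥0) ≤ 2 := by
    rw [← NNReal.coe_le_coe]; push_cast; linarith
  -- the product set E₀ = A × A
  set E₀ := {p : EuclideanSpace ℝ (Fin 2) | ∀ i, p i ∈ A} with hE₀def
  have hE₀c : IsCompact E₀ := cube_compact hA 2
  have hE₀dim : ((s + s : ℝ≥0) : ℝ≥0∞) ≤ dimH E₀ := dimH_cube_ge hA hs0 hsd
  have hE₀dim1 : 1 < dimH E₀ := by
    refine lt_of_lt_of_le ?_ hE₀dim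
    rw [show (1 : ℝ≥0∞) = ((1 : ℝ≥0) : ℝ≥0∞) by norm_num, ENNReal.coe_lt_coe,
      ← NNReal.coe_lt_coe]
    push_cast; linarith
  have hD := hLiu E₀ hE₀c hE₀dim1
  set D := {d : ℝ | ∃ p ∈ E₀, ∃ q ∈ E₀, d = dist p q} with hDdef
  have hDc : IsCompact D := dist_set_compact hE₀c
  -- the key strict inequality : 2 - (s+s) < dimH D
  have hcast1 : ((2 : ℝ≥0∞) - ((s + s : ℝ≥0) : ℝ≥0∞)) = (((2 - (s + s) : ℝ≥0)) : ℝ≥0∞) := by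
    rw [ENNReal.coe_sub]; norm_num
  have h23 : (2/3 : ℝ≥0) ≤ 4 * (s + s) / 3 := by
    rw [← NNReal.coe_le_coe]; push_cast; linarith
  have hcast2 : 4 * ((s + s : ℝ≥0) : ℝ≥0∞) / 3 - 2/3
      = (((4 * (s + s) / 3 - 2/3 : ℝ≥0)) : ℝ≥0∞) := by
    rw [ENNReal.coe_sub, ENNReal.coe_div (by norm_num), ENNReal.coe_mul]
    norm_num
  have hkey : ((2 : ℝ≥0∞) - ((s + s : ℝ≥0) : ℝ≥0∞)) < dimH D := by
    have hmono : min (4 * ((s + s : ℝ≥0) : ℝ≥0∞) / 3 - 2/3) 1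
        ≤ min (4 * dimH E₀ / 3 - 2/3) 1 := by
      refine min_le_min ?_ le_rfl
      gcongr
    have hlt : ((2 : ℝ≥0∞) - ((s + s : ℝ≥0) : ℝ≥0∞))
        < min (4 * ((s + s : ℝ≥0) : ℝ≥0∞) / 3 - 2/3) 1 := by
      refine lt_min ?_ ?_
      · rw [hcast1, hcast2, ENNReal.coe_lt_coe, ← NNReal.coe_lt_coe,
          NNReal.coe_sub hss2, NNReal.coe_sub h23]
        push_cast; linarith
      · rw [hcast1, show (1 : ℝ≥0∞) = ((1 : ℝ≥0) : ℝ≥0∞) by norm_num, ENNReal.coe_lt_coe,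
          ← NNReal.coe_lt_coe, NNReal.coe_sub hss2]
        push_cast; linarith
    exact lt_of_lt_of_le hlt (le_trans hmono hD)
  -- decompose D and pick a piece away from 0
  set Dn : ℕ → Set ℝ := fun n => D ∩ Ici (1/(n+1) : ℝ) with hDndef
  have hDnn : ∀ d ∈ D, 0 ≤ d := by
    rintro d ⟨p, hp, q, hq, rfl⟩; exact dist_nonneg
  have hsub : D ⊆ {0} ∪ ⋃ n, Dn n := by
    intro d hd
    rcases eq_or_lt_of_le (hDnn d hd) with h0 | h0
    · exact Or.inl (by simp [← h0])
    · obtain ⟨n, hn⟩ := exists_nat_one_div_lt h0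
      exact Or.inr (Set.mem_iUnion.mpr ⟨n, hd, hn.le⟩)
  have hsup : dimH D ≤ ⨆ n, dimH (Dn n) := by
    calc dimH D ≤ dimH ({0} ∪ ⋃ n, Dn n) := dimH_mono hsub
      _ = max (dimH ({0} : Set ℝ)) (dimH (⋃ n, Dn n)) := dimH_union _ _
      _ = dimH (⋃ n, Dn n) := by rw [dimH_singleton]; simp
      _ = ⨆ n, dimH (Dn n) := dimH_iUnion _
  obtain ⟨n, hn⟩ := lt_iSup_iff.mp (lt_of_lt_of_le hkey hsup)
  set ε : ℝ := 1/(n+1) with hεdef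
  have hε : 0 < ε := by positivity
  have hDnc : IsCompact (Dn n) := hDc.inter_right isClosed_Ici
  set C := (fun x : ℝ => x ^ 2) '' Dn n with hCdef
  have hCc : IsCompact C := hDnc.image (continuous_pow 2)
  have hCsub : C ⊆ Ici (ε ^ 2) := by
    rintro c ⟨d, hd, rfl⟩
    exact pow_le_pow_left₀ hε.le hd.2 2
  have himg : Real.sqrt '' C = Dn n := by
    rw [hCdef, Set.image_image]
    ext z
    constructor
    · rintro ⟨d, hd, rfl⟩
      have hdd : Real.sqrt (d ^ 2) = d := Real.sqrt_sq (le_trans hε.le hd.2)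
      simpa [hdd] using hd
    · intro hz
      exact ⟨z, hz, by simpa using Real.sqrt_sq (le_trans hε.le hz.2)⟩
  have hdimC : dimH (Dn n) ≤ dimH C := by
    rw [← himg]
    exact ((sqrt_lipschitzOnWith (by positivity : (0:ℝ) < ε ^ 2)).mono hCsub).dimH_image_le
  -- sum of dimensions > 2
  have hsum : 2 < dimH A + dimH A + dimH C := by
    have hDn_lt : ((2 : ℝ≥0∞) - ((s + s : ℝ≥0) : ℝ≥0∞)) < dimH C :=
      lt_of_lt_of_le hn hdimC
    have h2sum : (((s + s : ℝ≥0)) : ℝ≥0∞) + ((2 : ℝ≥0∞) - ((s + s : ℝ≥0) : ℝ≥0∞)) = 2 :=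
      add_tsub_cancel_of_le (by exact_mod_cast hss2)
    calc (2 : ℝ≥0∞) = ((s + s : ℝ≥0) : ℝ≥0∞) + ((2 : ℝ≥0∞) - ((s + s : ℝ≥0) : ℝ≥0∞)) :=
          h2sum.symm
      _ < ((s + s : ℝ≥0) : ℝ≥0∞) + dimH C := by
          exact ENNReal.add_lt_add_left ENNReal.coe_ne_top hDn_lt
      _ = ((s : ℝ≥0) : ℝ≥0∞) + ((s : ℝ≥0) : ℝ≥0∞) + dimH C := by
          rw [ENNReal.coe_add]
      _ ≤ dimH A + dimH A + dimH C := by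
          gcongr <;> exact hsd.le
  have hW := hMain A A C hA hA hCc hsum
  -- the goal distance set
  set S₃ := {p : EuclideanSpace ℝ (Fin 3) | ∀ i, p i ∈ A} with hS₃def
  set Δ₃ := {d : ℝ | ∃ p ∈ S₃, ∃ q ∈ S₃, d = dist p q} with hΔ₃def
  have hS₃c : IsCompact S₃ := cube_compact hA 3
  have hΔ₃c : IsCompact Δ₃ := dist_set_compact hS₃c
  -- W ⊆ sq '' Δ₃
  have hWsub : {w : ℝ | ∃ a ∈ A, ∃ b ∈ A, ∃ c ∈ C, w = (a - b)^2 + c}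
      ⊆ (fun x : ℝ => x ^ 2) '' Δ₃ := by
    rintro w ⟨a, ha, b, hb, c, ⟨e, he, rfl⟩, rfl⟩
    obtain ⟨p, hp, q, hq, rfl⟩ := he.1
    set P : EuclideanSpace ℝ (Fin 3) := WithLp.toLp 2 (Fin.cons a p.ofLp) with hPdef
    set Q : EuclideanSpace ℝ (Fin 3) := WithLp.toLp 2 (Fin.cons b q.ofLp) with hQdef
    have hP : P ∈ S₃ := by
      intro i
      refine Fin.cases ?_ ?_ i
      · simpa [hPdef] using ha
      · intro j; simpa [hPdef] using hp j
    have hQ : Q ∈ S₃ := by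
      intro i
      refine Fin.cases ?_ ?_ i
      · simpa [hQdef] using hb
      · intro j; simpa [hQdef] using hq j
    have hdistP : dist P Q ^ 2 = (a - b)^2 + (dist p q) ^ 2 := by
      rw [EuclideanSpace.dist_eq, Real.sq_sqrt (by positivity)]
      rw [EuclideanSpace.dist_eq, Real.sq_sqrt (by positivity)]
      rw [Fin.sum_univ_succ]
      simp only [hPdef, hQdef, Fin.cons_zero, Fin.cons_succ]
      rw [Real.dist_eq, sq_abs]
    refine ⟨dist P Q, ⟨P, hP, Q, hQ, rfl⟩, ?_⟩
    show dist P Q ^ 2 = (a - b)^2 + dist p q ^ 2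
    exact hdistP
  -- conclude
  by_contra hvol
  have hz : volume Δ₃ = 0 := le_zero_iff.mp (not_lt.mp hvol)
  obtain ⟨M, hMsub⟩ := hΔ₃c.isBounded.subset_closedBall 0
  set M' := max M 0 with hM'def
  have hM'0 : (0:ℝ) ≤ M' := le_max_right _ _
  have hMsub' : Δ₃ ⊆ Metric.closedBall 0 M' :=
    hMsub.trans (Metric.closedBall_subset_closedBall (le_max_left _ _))
  have hlip := (sq_lipschitzOnWith hM'0).mono hMsub'
  have h3 := hlip.hausdorffMeasure_image_le (zero_le_one (α := ℝ))
  rw [MeasureTheory.hausdorffMeasure_real] at h3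
  rw [hz, mul_zero] at h3
  have h4 : volume ((fun x : ℝ => x ^ 2) '' Δ₃) = 0 := le_zero_iff.mp h3
  have h5 := measure_mono (μ := volume) hWsub
  rw [h4] at h5
  exact absurd (le_zero_iff.mp h5) (ne_of_gt hW)
end
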